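/- Let A,B be real numbers with B≠0, let f,ψ ∈ L²(ℝ), and let γ ∈ ℝ, t ∈ ℝ, ζ > 0. Then the NSAWT satisfies the translation covariance A_ψ[ f(· − γ) ](t,ζ) = exp{ −iAγ(t−γ)/B } · A_ψ[ y ↦ exp{ iAyγ/B } f(y) ](t−γ, ζ). -/

import Mathlib

/-
Substituting x = y + γ, which preserves Lebesgue measure, turns the window centred at t into the
window centred at t - γ up to the chirp factor exp{iAγ(t - γ - y)/B}: its y-independent part leaves
the integral, and the rest is absorbed into the modulated signal.
-/

open MeasureTheory Real Set

/-- The analyzing window of the novel special affine wavelet transform. -/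
noncomputable def waveWindow (A B : ℝ) (ψ : ℝ → ℂ) (t ζ : ℝ) (x : ℝ) : ℂ :=
  ((Real.sqrt (2 * Real.pi * |B|))⁻¹ * (Real.sqrt ζ)⁻¹ : ℝ) *
    ψ ((x - t) / ζ) *
    Complex.exp (Complex.I * (A : ℂ) * (x : ℂ) * ((t : ℂ) - (x : ℂ)) / (B : ℂ))

/-- The novel special affine wavelet transform (NSAWT). -/
noncomputable def NSAWT (A B : ℝ) (ψ : ℝ → ℂ) (f : ℝ → ℂ) (t ζ : ℝ) : ℂ :=
  ∫ x : ℝ, f x * (starRingEnd ℂ) (waveWindow A B ψ t ζ x)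

theorem waveWindow_add_right (A B : ℝ) (ψ : ℝ → ℂ) (t ζ y γ : ℝ) :
    waveWindow A B ψ t ζ (y + γ) =
      Complex.exp (Complex.I * A * γ * (t - γ) / B - Complex.I * A * y * γ / B) *
        waveWindow A B ψ (t - γ) ζ y := by
  have harg : (y + γ - t) / ζ = (y - (t - γ)) / ζ := by ring
  have hphase : Complex.I * A * ↑(y + γ) * (t - ↑(y + γ)) / B =
      (Complex.I * A * γ * (t - γ) / B - Complex.I * A * y * γ / B) +
        Complex.I * A * y * (↑(t - γ) - y) / B := by
    push_cast
    ring
  rw [waveWindow, waveWindow, harg, hphase, Complex.exp_add]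
  ring

theorem conj_waveWindow_add_right (A B : ℝ) (ψ : ℝ → ℂ) (t ζ y γ : ℝ) :
    starRingEnd ℂ (waveWindow A B ψ t ζ (y + γ)) =
      Complex.exp (-(Complex.I * A * γ * (t - γ)) / B) *
        (Complex.exp (Complex.I * A * y * γ / B) *
          starRingEnd ℂ (waveWindow A B ψ (t - γ) ζ y)) := by
  have hphase : starRingEnd ℂ (Complex.I * A * γ * (t - γ) / B - Complex.I * A * y * γ / B) =
      -(Complex.I * A * γ * (t - γ)) / B + Complex.I * A * y * γ / B := by
    simp only [map_sub, map_mul, map_div₀, Complex.conj_I, Complex.conj_ofReal]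
    ring
  rw [waveWindow_add_right, map_mul, ← Complex.exp_conj, hphase, Complex.exp_add]
  ring

theorem NSAWT_comp_sub_right (A B : ℝ) (ψ f : ℝ → ℂ) (γ t ζ : ℝ) :
    NSAWT A B ψ (fun x => f (x - γ)) t ζ =
      ∫ y, f y * starRingEnd ℂ (waveWindow A B ψ t ζ (y + γ)) := by
  rw [NSAWT, ← integral_add_right_eq_self _ γ]
  simp only [add_sub_cancel_right]

theorem nsawt_translation_general (A B : ℝ)
    (f ψ : ℝ → ℂ)
    (γ t ζ : ℝ) :
    NSAWT A B ψ (fun x : ℝ => f (x - γ)) t ζ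
      = Complex.exp (-(Complex.I * (A : ℂ) * (γ : ℂ) * ((t : ℂ) - (γ : ℂ))) / (B : ℂ)) *
        NSAWT A B ψ (fun y : ℝ => Complex.exp (Complex.I * (A : ℂ) * (y : ℂ) * (γ : ℂ) / (B : ℂ)) * f y)
          (t - γ) ζ := by
  rw [NSAWT_comp_sub_right, NSAWT, ← integral_const_mul]
  congr 1 with y
  rw [conj_waveWindow_add_right]
  ring

/-- Translation covariance of the NSAWT. -/
theorem nsawt_translation (A B : ℝ) (hB : B ≠ 0)
    (f ψ : ℝ → ℂ) (hf : MemLp f 2) (hψ : MemLp ψ 2)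
    (γ t ζ : ℝ) (hζ : 0 < ζ) :
    NSAWT A B ψ (fun x : ℝ => f (x - γ)) t ζ
      = Complex.exp (-(Complex.I * (A : ℂ) * (γ : ℂ) * ((t : ℂ) - (γ : ℂ))) / (B : ℂ)) *
        NSAWT A B ψ (fun y : ℝ => Complex.exp (Complex.I * (A : ℂ) * (y : ℂ) * (γ : ℂ) / (B : ℂ)) * f y)
          (t - γ) ζ :=
  nsawt_translation_general A B f ψ γ t ζ
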